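/- arXiv:1304.5093 — 3 statements merged into one kernel-verified Lean document; each statement's English description precedes it below -/
import Mathlib

section
/- Let Z and Z' be tails of a nodal curve C with k_Z > 1, k_{Z'} > 1, such that (Z,Z') is free (Term_Z ∩ Term_{Z'} = ∅), Z ∧ Z' is nonempty, Z ∪ Z' ≠ C, and (k_Z, k_{Z'}) = (2,3). Then k_{Z∧Z'} > 1, k_{Z∪Z'} > 1, k_{Z∧Z'} + k_{Z∪Z'} = 5, and both Z ∧ Z' and Z ∪ Z' are tails. -/
open Set

/- Dual multigraph model of a nodal curve: vertices `V` are irreducible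
components, edges `E` are nodes, with endpoint maps `s t : E → V`. -/

/-- The set of terminal points (edges of the cut) of a vertex subset `Z`. -/
def TermPts {V E : Type} (s t : E → V) (Z : Set V) : Set E :=
  {e | (s e ∈ Z ∧ t e ∉ Z) ∨ (t e ∈ Z ∧ s e ∉ Z)}

/-- A subcurve is a nonempty proper subset of the components. -/
def Subcurve {V : Type} (Z : Set V) : Prop := Z.Nonempty ∧ Z ≠ Set.univ

/-- Connectivity of the induced sub-multigraph on `Z`. -/
def ConnOn {V E : Type} (s t : E → V) (Z : Set V) : Prop :=
  ∀ x ∈ Z, ∀ y ∈ Z,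
    Relation.ReflTransGen
      (fun a b => a ∈ Z ∧ b ∈ Z ∧ ∃ e, (s e = a ∧ t e = b) ∨ (s e = b ∧ t e = a)) x y

/-- A tail is a subcurve with both sides connected. -/
def IsTail {V E : Type} (s t : E → V) (Z : Set V) : Prop :=
  Subcurve Z ∧ ConnOn s t Z ∧ ConnOn s t Zᶜ

/-- `k_Z`, the number of terminal points of `Z`. -/
noncomputable def kcut {V E : Type} (s t : E → V) (Z : Set V) : ℕ :=
  (TermPts s t Z).ncard

/-- The pair `(Z, Z')` is free if the edge cuts are disjoint. -/
def FreePair {V E : Type} (s t : E → V) (Z Z' : Set V) : Prop :=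
  TermPts s t Z ∩ TermPts s t Z' = ∅

/-- The pair `(Z, Z')` is perfect. -/
def PerfectPair {V : Type} (Z Z' : Set V) : Prop :=
  Z ⊆ Z' ∨ Z' ⊆ Z ∨ Zᶜ ⊆ Z' ∨ Z' ⊆ Zᶜ


/-!
Split the components into `A = Z ∩ Z'`, `B = Z \ Z'`, `C = Z' \ Z` and `D = (Z ∪ Z')ᶜ`.
Freeness forbids edges `A–D` and `B–C`, so `k_Z = |AC| + |BD|`, `k_{Z'} = |AB| + |CD|`,
`k_{Z ∩ Z'} = |AB| + |AC|` and `k_{Z ∪ Z'} = |BD| + |CD|`. Connectivity of `Z`, `Z'` and their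
complements makes all four edge sets nonempty, so `k_Z = 2` forces `|AC| = |BD| = 1`. A single
edge joining `A` to `C` inside the connected `Z'` cannot be needed to connect `A`, and likewise
for `D` inside `Z'ᶜ`; the unions `Z ∪ Z'` and `Zᶜ ∪ Z'ᶜ` are connected since they overlap.
-/

section Graph

variable {V E : Type} (s t : E → V)

abbrev InducedAdj (W : Set V) (a b : V) : Prop :=
  a ∈ W ∧ b ∈ W ∧ ∃ e, (s e = a ∧ t e = b) ∨ (s e = b ∧ t e = a)

def TermPtsIn (W X : Set V) : Set E :=
  {e | s e ∈ W ∧ t e ∈ W} ∩ TermPts s t X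

variable {s t}

instance (W : Set V) : Std.Symm (InducedAdj s t W) where
  symm _ _ := fun ⟨ha, hb, e, h⟩ => ⟨hb, ha, e, h.symm⟩

lemma InducedAdj.mono {W W' : Set V} (h : W ⊆ W') {a b : V} (hab : InducedAdj s t W a b) :
    InducedAdj s t W' a b :=
  ⟨h hab.1, h hab.2.1, hab.2.2⟩

lemma connOn_union {W W' : Set V} (h : ConnOn s t W) (h' : ConnOn s t W')
    (hne : (W ∩ W').Nonempty) : ConnOn s t (W ∪ W') := by
  obtain ⟨a, haW, haW'⟩ := hne
  have reach : ∀ z ∈ W ∪ W', Relation.ReflTransGen (InducedAdj s t (W ∪ W')) z a := by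
    rintro z (hz | hz)
    · exact Relation.ReflTransGen.mono (fun _ _ => InducedAdj.mono subset_union_left) _ _
        (h z hz a haW)
    · exact Relation.ReflTransGen.mono (fun _ _ => InducedAdj.mono subset_union_right) _ _
        (h' z hz a haW')
  intro x hx y hy
  exact (reach x hx).trans (Std.Symm.symm _ _ (reach y hy))

lemma termPtsIn_nonempty {W X : Set V} (hW : ConnOn s t W) {x y : V} (hx : x ∈ W) (hy : y ∈ W)
    (hxX : x ∈ X) (hyX : y ∉ X) : (TermPtsIn s t W X).Nonempty := by
  induction hW x hx y hy with
  | refl => exact absurd hxX hyX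
  | @tail b c _ hbc ih =>
    by_cases hb : b ∈ X
    · obtain ⟨hbW, hcW, e, he⟩ := hbc
      refine ⟨e, ?_, ?_⟩ <;>
        rcases he with ⟨rfl, rfl⟩ | ⟨rfl, rfl⟩ <;> simp_all [TermPts]
    · exact ih hbc.1 hb

lemma ncard_termPtsIn_pos {W X : Set V} (hW : ConnOn s t W) (hX : (TermPts s t X).Finite)
    {x y : V} (hx : x ∈ W) (hy : y ∈ W) (hxX : x ∈ X) (hyX : y ∉ X) :
    0 < (TermPtsIn s t W X).ncard :=
  (ncard_pos (hX.subset inter_subset_right)).mpr (termPtsIn_nonempty hW hx hy hxX hyX)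

/-- A walk in `W` between points of `X` either stays in `X` or passes through `a`. -/
lemma connOn_inter_of_exits_at {W X : Set V} {a : V} (hW : ConnOn s t W)
    (hexit : ∀ u v, InducedAdj s t W u v → u ∈ X → v ∉ X → u = a) : ConnOn s t (W ∩ X) := by
  have key : ∀ x y, Relation.ReflTransGen (InducedAdj s t W) x y → x ∈ X → y ∈ X →
      Relation.ReflTransGen (InducedAdj s t (W ∩ X)) x y ∨
        Relation.ReflTransGen (InducedAdj s t (W ∩ X)) x a := by
    intro x y hxy
    induction hxy using Relation.ReflTransGen.head_induction_on with
    | refl => exact fun _ _ => Or.inl .refl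
    | @head x b hxb _ ih =>
      intro hx hy
      by_cases hb : b ∈ X
      · have step : InducedAdj s t (W ∩ X) x b := ⟨⟨hxb.1, hx⟩, ⟨hxb.2.1, hb⟩, hxb.2.2⟩
        exact (ih hb hy).imp (.head step) (.head step)
      · exact Or.inr (hexit x b hxb hx hb ▸ .refl)
  intro x hx y hy
  rcases key x y (hW x hx.1 y hy.1) hx.2 hy.2 with hxy | hxa
  · exact hxy
  rcases key y x (hW y hy.1 x hx.1) hy.2 hx.2 with hyx | hya
  · exact Std.Symm.symm _ _ hyx
  · exact hxa.trans (Std.Symm.symm _ _ hya)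

lemma connOn_inter_of_subsingleton {W X : Set V} (hW : ConnOn s t W)
    (h : (TermPtsIn s t W X).Subsingleton) : ConnOn s t (W ∩ X) := by
  intro x hx
  by_cases hex : ∃ u v, InducedAdj s t W u v ∧ u ∈ X ∧ v ∉ X
  · obtain ⟨u, v, ⟨huW, hvW, e, he⟩, hu, hv⟩ := hex
    refine connOn_inter_of_exits_at (a := u) hW ?_ x hx
    rintro u' v' ⟨hu'W, hv'W, e', he'⟩ hu' hv'
    have hee' : e = e' := h
      (by rcases he with ⟨rfl, rfl⟩ | ⟨rfl, rfl⟩ <;> simp_all [TermPtsIn, TermPts])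
      (by rcases he' with ⟨rfl, rfl⟩ | ⟨rfl, rfl⟩ <;> simp_all [TermPtsIn, TermPts])
    subst hee'
    rcases he with ⟨rfl, rfl⟩ | ⟨rfl, rfl⟩ <;> rcases he' with ⟨rfl, rfl⟩ | ⟨rfl, rfl⟩ <;> tauto
  · exact connOn_inter_of_exits_at (a := x) hW
      (fun u v huv hu hv => (hex ⟨u, v, huv, hu, hv⟩).elim) x hx

lemma termPts_compl (X : Set V) : TermPts s t Xᶜ = TermPts s t X := by
  ext e
  simp only [TermPts, mem_ofPred_eq, mem_compl_iff, not_not]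
  tauto

lemma termPtsIn_compl (W X : Set V) : TermPtsIn s t W Xᶜ = TermPtsIn s t W X := by
  rw [TermPtsIn, TermPtsIn, termPts_compl]

lemma kcut_compl (X : Set V) : kcut s t Xᶜ = kcut s t X := by
  rw [kcut, kcut, termPts_compl]

lemma FreePair.symm {X Y : Set V} (h : FreePair s t X Y) : FreePair s t Y X := by
  rwa [FreePair, inter_comm]

lemma FreePair.compl {X Y : Set V} (h : FreePair s t X Y) : FreePair s t Xᶜ Yᶜ := by
  rwa [FreePair, termPts_compl, termPts_compl]

lemma notMem_termPts_of_freePair {X Y : Set V} (h : FreePair s t X Y) {e : E}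
    (he : e ∈ TermPts s t X) : e ∉ TermPts s t Y :=
  fun he' => (eq_empty_iff_forall_notMem.mp h e) ⟨he, he'⟩

lemma kcut_eq_of_freePair {X W : Set V} (h : FreePair s t X W) (hX : (TermPts s t X).Finite) :
    kcut s t X = (TermPtsIn s t W X).ncard + (TermPtsIn s t Wᶜ X).ncard := by
  have hsplit : TermPts s t X = TermPtsIn s t W X ∪ TermPtsIn s t Wᶜ X := by
    ext e
    have := @notMem_termPts_of_freePair _ _ _ _ _ _ h e
    simp only [TermPtsIn, TermPts, mem_union, mem_inter_iff, mem_ofPred_eq, mem_compl_iff] at *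
    tauto
  have hdisj : Disjoint (TermPtsIn s t W X) (TermPtsIn s t Wᶜ X) :=
    disjoint_left.mpr fun _ he he' => he'.1.1 he.1.1
  rw [kcut, hsplit, ncard_union_eq hdisj (hX.subset inter_subset_right)
    (hX.subset inter_subset_right)]

lemma kcut_inter_of_freePair {X Y : Set V} (h : FreePair s t X Y) (hX : (TermPts s t X).Finite)
    (hY : (TermPts s t Y).Finite) :
    kcut s t (X ∩ Y) = (TermPtsIn s t X Y).ncard + (TermPtsIn s t Y X).ncard := by
  have hsplit : TermPts s t (X ∩ Y) = TermPtsIn s t X Y ∪ TermPtsIn s t Y X := by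
    ext e
    have := @notMem_termPts_of_freePair _ _ _ _ _ _ h e
    simp only [TermPtsIn, TermPts, mem_union, mem_inter_iff, mem_ofPred_eq] at *
    tauto
  have hdisj : Disjoint (TermPtsIn s t X Y) (TermPtsIn s t Y X) := by
    refine disjoint_left.mpr fun e he he' => ?_
    simp only [TermPtsIn, TermPts, mem_inter_iff, mem_ofPred_eq] at he he'
    tauto
  rw [kcut, hsplit, ncard_union_eq hdisj (hY.subset inter_subset_right)
    (hX.subset inter_subset_right)]

lemma kcut_union_of_freePair {X Y : Set V} (h : FreePair s t X Y) (hX : (TermPts s t X).Finite)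
    (hY : (TermPts s t Y).Finite) :
    kcut s t (X ∪ Y) = (TermPtsIn s t Xᶜ Y).ncard + (TermPtsIn s t Yᶜ X).ncard := by
  rw [← kcut_compl, compl_union, kcut_inter_of_freePair h.compl (by rwa [termPts_compl])
    (by rwa [termPts_compl]), termPtsIn_compl, termPtsIn_compl]

lemma isTail_inter_and_union {Z Z' : Set V} (hZ : IsTail s t Z) (hZ' : IsTail s t Z')
    (hA : (Z ∩ Z').Nonempty) (hD : (Zᶜ ∩ Z'ᶜ).Nonempty)
    (hAC : (TermPtsIn s t Z' Z).Subsingleton) (hBD : (TermPtsIn s t Z'ᶜ Z).Subsingleton) :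
    IsTail s t (Z ∩ Z') ∧ IsTail s t (Z ∪ Z') := by
  obtain ⟨⟨-, hZuniv⟩, hZconn, hZcconn⟩ := hZ
  obtain ⟨-, hZ'conn, hZ'cconn⟩ := hZ'
  refine ⟨⟨⟨hA, fun h => hZuniv (univ_subset_iff.mp (h ▸ inter_subset_left))⟩, ?_, ?_⟩,
    ⟨⟨hA.mono (inter_subset_left.trans subset_union_left), fun h => ?_⟩,
      connOn_union hZconn hZ'conn hA, ?_⟩⟩
  · rw [inter_comm]
    exact connOn_inter_of_subsingleton hZ'conn hAC
  · rw [compl_inter]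
    exact connOn_union hZcconn hZ'cconn hD
  · simp [← compl_union, h] at hD
  · rw [compl_union, inter_comm]
    exact connOn_inter_of_subsingleton hZ'cconn (by rwa [termPtsIn_compl])

end Graph

theorem stmt_5_general {V E : Type} (s t : E → V)
    (Z Z' : Set V)
    (hZ : IsTail s t Z) (hZ' : IsTail s t Z')
    (hfree : FreePair s t Z Z')
    (hne : (Z ∩ Z').Nonempty) (hun : Z ∪ Z' ≠ Set.univ)
    (hk2 : kcut s t Z = 2) (hk3 : kcut s t Z' = 3) :
    1 < kcut s t (Z ∩ Z') ∧ 1 < kcut s t (Z ∪ Z') ∧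
    kcut s t (Z ∩ Z') + kcut s t (Z ∪ Z') = 5 ∧
    IsTail s t (Z ∩ Z') ∧ IsTail s t (Z ∪ Z') := by
  rcases (Z \ Z').eq_empty_or_nonempty with hB | ⟨b, hbZ, hbZ'⟩
  · have hsub : Z ⊆ Z' := sdiff_eq_empty.mp hB
    rw [inter_eq_left.mpr hsub, union_eq_right.mpr hsub]
    exact ⟨by omega, by omega, by omega, hZ, hZ'⟩
  rcases (Z' \ Z).eq_empty_or_nonempty with hC | ⟨c, hcZ', hcZ⟩
  · have hsub : Z' ⊆ Z := sdiff_eq_empty.mp hC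
    rw [inter_eq_right.mpr hsub, union_eq_left.mpr hsub]
    exact ⟨by omega, by omega, by omega, hZ', hZ⟩
  obtain ⟨a, haZ, haZ'⟩ := hne
  obtain ⟨d, hdZ, hdZ'⟩ : (Zᶜ ∩ Z'ᶜ).Nonempty := by simpa using nonempty_compl.mpr hun
  have hfinZ : (TermPts s t Z).Finite :=
    finite_of_ncard_ne_zero (show kcut s t Z ≠ 0 by omega)
  have hfinZ' : (TermPts s t Z').Finite :=
    finite_of_ncard_ne_zero (show kcut s t Z' ≠ 0 by omega)
  have hAB := ncard_termPtsIn_pos hZ.2.1 hfinZ' haZ hbZ haZ' hbZ'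
  have hAC := ncard_termPtsIn_pos hZ'.2.1 hfinZ haZ' hcZ' haZ hcZ
  have hBD := ncard_termPtsIn_pos hZ'.2.2 hfinZ hbZ' hdZ' hbZ hdZ
  have hCD := ncard_termPtsIn_pos hZ.2.2 hfinZ' hcZ hdZ hcZ' hdZ'
  have kZ := kcut_eq_of_freePair hfree hfinZ
  have kZ' := kcut_eq_of_freePair hfree.symm hfinZ'
  have kI := kcut_inter_of_freePair hfree hfinZ hfinZ'
  have kU := kcut_union_of_freePair hfree hfinZ hfinZ'
  obtain ⟨eAC, hAC1⟩ := ncard_eq_one.mp (show (TermPtsIn s t Z' Z).ncard = 1 by omega)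
  obtain ⟨eBD, hBD1⟩ := ncard_eq_one.mp (show (TermPtsIn s t Z'ᶜ Z).ncard = 1 by omega)
  refine ⟨by omega, by omega, by omega, isTail_inter_and_union hZ hZ' ⟨a, haZ, haZ'⟩ ⟨d, hdZ, hdZ'⟩
    (hAC1 ▸ subsingleton_singleton) (hBD1 ▸ subsingleton_singleton)⟩

/-- Lemma 3.3 (iii): for free tails `Z, Z'` with `(k_Z, k_{Z'}) = (2,3)`,
nonempty intersection and proper union, the intersection and union are tails
with `k_{Z∧Z'} > 1`, `k_{Z∪Z'} > 1` and `k_{Z∧Z'} + k_{Z∪Z'} = 5`. -/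
theorem stmt_5 {V E : Type} [Fintype V] [Fintype E] (s t : E → V)
    (hC : ConnOn s t Set.univ) (Z Z' : Set V)
    (hZ : IsTail s t Z) (hZ' : IsTail s t Z')
    (hkZ : 1 < kcut s t Z) (hkZ' : 1 < kcut s t Z')
    (hfree : FreePair s t Z Z')
    (hne : (Z ∩ Z').Nonempty) (hun : Z ∪ Z' ≠ Set.univ)
    (hk2 : kcut s t Z = 2) (hk3 : kcut s t Z' = 3) :
    1 < kcut s t (Z ∩ Z') ∧ 1 < kcut s t (Z ∪ Z') ∧
    kcut s t (Z ∩ Z') + kcut s t (Z ∪ Z') = 5 ∧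
    IsTail s t (Z ∩ Z') ∧ IsTail s t (Z ∪ Z') :=
  stmt_5_general s t Z Z' hZ hZ' hfree hne hun hk2 hk3
end

section
/- Let Z be a tail of a nodal curve C with k_Z ≥ 3. Then there do not exist tails W ∈ T²_{i,j} and W' ∈ T³_{i,j}, each Z-terminal (Term_W ∩ Term_Z ≠ ∅ and Term_{W'} ∩ Term_Z ≠ ∅), with W ∪ W' ⊆ Z. -/
open Set

/-- `S²_{i,j}`: the 2-tails containing `vi, vj` and omitting `v1`. -/
def S2set {V E : Type} (s t : E → V) (v1 vi vj : V) : Set (Set V) :=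
  {Z | IsTail s t Z ∧ kcut s t Z = 2 ∧ vi ∈ Z ∧ vj ∈ Z ∧ v1 ∉ Z}

/-- The levels of the inductive construction of the set of nested tails:
level `0` is `S` itself, and level `m+1` consists of the members `Z` of `S`
with `W_m ◁ Z`, where `W_m` is the intersection of the members of level `m`. -/
def Tlevel {V E : Type} (s t : E → V) (S : Set (Set V)) : ℕ → Set (Set V)
  | 0 => S
  | (m + 1) =>
      {Z | Z ∈ S ∧ ⋂₀ Tlevel s t S m ⊂ Z ∧ FreePair s t (⋂₀ Tlevel s t S m) Z}

/-- The set of nested tails extracted from `S`: the tails `W_m = ⋂ (level m)`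
for all `m` with level `m` nonempty. -/
def Tset {V E : Type} (s t : E → V) (S : Set (Set V)) : Set (Set V) :=
  {X | ∃ m, (Tlevel s t S m).Nonempty ∧ X = ⋂₀ Tlevel s t S m}

/-- `T²_{i,j}`, the set of nested 2-tails with respect to `(i, j)`. -/
def T2set {V E : Type} (s t : E → V) (v1 vi vj : V) : Set (Set V) :=
  Tset s t (S2set s t v1 vi vj)

/-- `S³_{i,j}`: the `T²_{i,j}`-free 3-tails containing `vi, vj`, omitting `v1`. -/
def S3set {V E : Type} (s t : E → V) (v1 vi vj : V) : Set (Set V) :=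
  {Z | IsTail s t Z ∧ kcut s t Z = 3 ∧ vi ∈ Z ∧ vj ∈ Z ∧ v1 ∉ Z ∧
        ∀ W ∈ T2set s t v1 vi vj, FreePair s t Z W}

/-- `T³_{i,j}`, the set of nested 3-tails with respect to `(i, j)`. -/
def T3set {V E : Type} (s t : E → V) (v1 vi vj : V) : Set (Set V) :=
  Tset s t (S3set s t v1 vi vj)

/-!
Take `A = W ∈ T²` and `B = W' ∈ T³`; their cuts are disjoint because `B` is `T²`-free.  They
cannot be nested: a terminal point of the smaller one on `Z` would be one of the larger.  So
they cross; write `P = A ∩ B`, `Q = A \ B`, `R = B \ A`, `S = (A ∪ B)ᶜ` and count the nodes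
between these regions.  Connectivity of `A`, `B` and of their complements makes the counts `PQ`,
`PR`, `QS`, `RS` positive, so `k_A = 2` and `k_B = 3` force either `A ∩ B` to be a 2-tail or
`k_{A ∪ B} = 2`.  In the first case the member of `T²` inside `A ∩ B` sharing a terminal point
with it (Corollary 4.2) shares a node with `A` or `B`, against the freeness built into `T²` and
`T³`.  In the second case both nodes of `A ∪ B` are terminal points of `Z`, so the connected `Z`
equals `A ∪ B`, contradicting `k_Z ≥ 3`.  The same counting shows that `S²` and `S³` are closed
under intersection, which makes the members of `T²` and `T³` 2- and 3-tails.
-/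

section Cuts

variable {V E : Type} (s t : E → V)

def edgesBetween (X Y : Set V) : Set E :=
  {e | (s e ∈ X ∧ t e ∈ Y) ∨ (s e ∈ Y ∧ t e ∈ X)}

variable {s t}

lemma edgesBetween_comm (X Y : Set V) : edgesBetween s t X Y = edgesBetween s t Y X := by
  ext e; simp only [edgesBetween, mem_ofPred_eq]; tauto

lemma edgesBetween_mono {X X' Y Y' : Set V} (hX : X ⊆ X') (hY : Y ⊆ Y') :
    edgesBetween s t X Y ⊆ edgesBetween s t X' Y' := by
  rintro e (⟨h₁, h₂⟩ | ⟨h₁, h₂⟩)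
  exacts [Or.inl ⟨hX h₁, hY h₂⟩, Or.inr ⟨hY h₁, hX h₂⟩]

lemma edgesBetween_union_left (X₁ X₂ Y : Set V) :
    edgesBetween s t (X₁ ∪ X₂) Y = edgesBetween s t X₁ Y ∪ edgesBetween s t X₂ Y := by
  ext e; simp only [edgesBetween, mem_union, mem_ofPred_eq]; tauto

lemma termPts_eq_edgesBetween (Z : Set V) : TermPts s t Z = edgesBetween s t Z Zᶜ := by
  ext e; simp only [TermPts, edgesBetween, mem_ofPred_eq, mem_compl_iff]; tauto

lemma edgesBetween_subset_termPts {X Y Z : Set V} (hX : X ⊆ Z) (hY : Y ⊆ Zᶜ) :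
    edgesBetween s t X Y ⊆ TermPts s t Z :=
  termPts_eq_edgesBetween Z ▸ edgesBetween_mono hX hY

lemma disjoint_edgesBetween_termPts {X Y Z : Set V} (hX : X ⊆ Z) (hY : Y ⊆ Z) :
    Disjoint (edgesBetween s t X Y) (TermPts s t Z) := by
  rw [disjoint_left]
  rintro e (⟨h₁, h₂⟩ | ⟨h₁, h₂⟩) (⟨-, h⟩ | ⟨-, h⟩)
  exacts [h (hY h₂), h (hX h₁), h (hX h₂), h (hY h₁)]

lemma termPts_inter_subset (A B : Set V) :
    TermPts s t (A ∩ B) ⊆ TermPts s t A ∪ TermPts s t B := by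
  intro e
  simp only [TermPts, mem_union, mem_ofPred_eq, mem_inter_iff]
  tauto

lemma termPts_union_subset (A B : Set V) :
    TermPts s t (A ∪ B) ⊆ TermPts s t A ∪ TermPts s t B := by
  intro e
  simp only [TermPts, mem_union, mem_ofPred_eq]
  tauto

lemma termPts_sInter_subset (F : Set (Set V)) :
    TermPts s t (⋂₀ F) ⊆ ⋃ Z ∈ F, TermPts s t Z := by
  rintro e (⟨hs, ht⟩ | ⟨ht, hs⟩)
  · obtain ⟨Z, hZ, htZ⟩ := not_forall₂.1 ht
    exact mem_biUnion hZ (Or.inl ⟨hs Z hZ, htZ⟩)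
  · obtain ⟨Z, hZ, hsZ⟩ := not_forall₂.1 hs
    exact mem_biUnion hZ (Or.inr ⟨ht Z hZ, hsZ⟩)

lemma termPts_inter_termPts_subset {A B Z : Set V} (hAB : A ⊆ B) (hBZ : B ⊆ Z) :
    TermPts s t A ∩ TermPts s t Z ⊆ TermPts s t B := by
  rintro e ⟨⟨hA, hA'⟩ | ⟨hA, hA'⟩, ⟨-, hZ⟩ | ⟨-, hZ⟩⟩
  · exact Or.inl ⟨hAB hA, fun h => hZ (hBZ h)⟩
  · exact absurd (hBZ (hAB hA)) hZ
  · exact absurd (hBZ (hAB hA)) hZ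
  · exact Or.inr ⟨hAB hA, fun h => hZ (hBZ h)⟩

lemma freePair_iff_disjoint {X Y : Set V} :
    FreePair s t X Y ↔ Disjoint (TermPts s t X) (TermPts s t Y) :=
  disjoint_iff_inter_eq_empty.symm

lemma FreePair.mono_left {X Y Z : Set V} (hXY : X ⊆ Y) (hYZ : Y ⊆ Z) (h : FreePair s t Y Z) :
    FreePair s t X Z :=
  freePair_iff_disjoint.2 <| disjoint_left.2 fun _e hX hZ =>
    disjoint_left.1 (freePair_iff_disjoint.1 h) (termPts_inter_termPts_subset hXY hYZ ⟨hX, hZ⟩) hZ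

lemma FreePair.of_termPts_subset {X Y A B : Set V}
    (hY : TermPts s t Y ⊆ TermPts s t A ∪ TermPts s t B)
    (hA : FreePair s t A X) (hB : FreePair s t B X) : FreePair s t Y X :=
  freePair_iff_disjoint.2 <|
    (disjoint_union_left.2 ⟨freePair_iff_disjoint.1 hA, freePair_iff_disjoint.1 hB⟩).mono_left hY

lemma FreePair.sInter_right {W : Set V} {F : Set (Set V)} (h : ∀ Z ∈ F, FreePair s t W Z) :
    FreePair s t W (⋂₀ F) :=
  freePair_iff_disjoint.2 <| (disjoint_iUnion₂_right.2 fun Z hZ =>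
    freePair_iff_disjoint.1 (h Z hZ)).mono_right (termPts_sInter_subset F)

lemma not_freePair_self {X : Set V} (h : (TermPts s t X).Nonempty) : ¬ FreePair s t X X := by
  rw [freePair_iff_disjoint, disjoint_self, bot_eq_empty, ← not_nonempty_iff_eq_empty]
  exact not_not_intro h

end Cuts

section Connectivity

variable {V E : Type} (s t : E → V)

def AdjOn (U : Set V) (a b : V) : Prop :=
  a ∈ U ∧ b ∈ U ∧ ∃ e, (s e = a ∧ t e = b) ∨ (s e = b ∧ t e = a)

variable {s t}

instance (U : Set V) : Std.Symm (AdjOn s t U) :=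
  ⟨fun _ _ ⟨ha, hb, e, he⟩ => ⟨hb, ha, e, he.symm⟩⟩

lemma ConnOn.union {X Y : Set V} (hX : ConnOn s t X) (hY : ConnOn s t Y) {x y : V}
    (hx : x ∈ X) (hy : y ∈ Y) (hxy : Relation.ReflTransGen (AdjOn s t (X ∪ Y)) x y) :
    ConnOn s t (X ∪ Y) := by
  have mono {W : Set V} (hW : W ⊆ X ∪ Y) :
      Relation.ReflTransGen (AdjOn s t W) ≤ Relation.ReflTransGen (AdjOn s t (X ∪ Y)) :=
    Relation.ReflTransGen.mono fun _ _ ⟨ha, hb, he⟩ => ⟨hW ha, hW hb, he⟩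
  have reach : ∀ u ∈ X ∪ Y, Relation.ReflTransGen (AdjOn s t (X ∪ Y)) u y := by
    rintro u (hu | hu)
    · exact (mono subset_union_left _ _ (hX u hu x hx)).trans hxy
    · exact mono subset_union_right _ _ (hY u hu y hy)
  exact fun a ha b hb => (reach a ha).trans (Std.Symm.symm _ _ (reach b hb))

lemma ConnOn.union_of_inter_nonempty {X Y : Set V} (hX : ConnOn s t X) (hY : ConnOn s t Y)
    (h : (X ∩ Y).Nonempty) : ConnOn s t (X ∪ Y) :=
  let ⟨_, hvX, hvY⟩ := h
  hX.union hY hvX hvY .refl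

lemma ConnOn.union_of_edgesBetween_nonempty {X Y : Set V} (hX : ConnOn s t X)
    (hY : ConnOn s t Y) (h : (edgesBetween s t X Y).Nonempty) : ConnOn s t (X ∪ Y) := by
  obtain ⟨e, ⟨hs, ht⟩ | ⟨hs, ht⟩⟩ := h
  · exact hX.union hY hs ht (.single ⟨.inl hs, .inr ht, e, .inl ⟨rfl, rfl⟩⟩)
  · exact hX.union hY ht hs (.single ⟨.inl ht, .inr hs, e, .inr ⟨rfl, rfl⟩⟩)

lemma ConnOn.edgesBetween_inter_sdiff_nonempty {U X : Set V} (h : ConnOn s t U) {a b : V}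
    (ha : a ∈ U ∩ X) (hb : b ∈ U \ X) : (edgesBetween s t (U ∩ X) (U \ X)).Nonempty := by
  obtain ⟨haU, haX⟩ := ha
  induction h a haU b hb.1 using Relation.ReflTransGen.head_induction_on with
  | refl => exact absurd haX hb.2
  | @head a c hac _ ih =>
    obtain ⟨-, hcU, e, he⟩ := hac
    by_cases hcX : c ∈ X
    · exact ih hcU hcX
    · refine ⟨e, ?_⟩
      rcases he with ⟨rfl, rfl⟩ | ⟨rfl, rfl⟩
      exacts [Or.inl ⟨⟨haU, haX⟩, hcU, hcX⟩, Or.inr ⟨⟨hcU, hcX⟩, haU, haX⟩]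

lemma ConnOn.edgesBetween_nonempty {X Y : Set V} (h : ConnOn s t (X ∪ Y)) (hXY : Disjoint X Y)
    (hX : X.Nonempty) (hY : Y.Nonempty) : (edgesBetween s t X Y).Nonempty := by
  obtain ⟨x, hx⟩ := hX
  obtain ⟨y, hy⟩ := hY
  have := h.edgesBetween_inter_sdiff_nonempty (X := X) ⟨.inl hx, hx⟩
    ⟨.inr hy, disjoint_right.1 hXY hy⟩
  rwa [union_inter_cancel_left, union_sdiff_cancel_left hXY.le_bot] at this

/-- Collapse `Y` onto the endpoint in `X` of the bridge `f`: paths in `X ∪ Y` project to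
paths in `X`. -/
lemma ConnOn.left_of_edgesBetween_eq_singleton {X Y : Set V} (h : ConnOn s t (X ∪ Y))
    (hXY : Disjoint X Y) {f : E} (hf : edgesBetween s t X Y = {f}) : ConnOn s t X := by
  classical
  obtain ⟨p, hp⟩ : ∃ p, ∀ v ∈ X, (s f = v ∨ t f = v) → v = p := by
    rcases hf.symm.subset rfl with ⟨hs, ht⟩ | ⟨ht, hs⟩
    · refine ⟨s f, fun v hv => ?_⟩
      rintro (rfl | rfl)
      exacts [rfl, absurd hv (disjoint_right.1 hXY ht)]
    · refine ⟨t f, fun v hv => ?_⟩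
      rintro (rfl | rfl)
      exacts [absurd hv (disjoint_right.1 hXY ht), rfl]
  have crossing : ∀ a b, AdjOn s t (X ∪ Y) a b → a ∈ X → b ∉ X → a = p := by
    rintro a b ⟨-, hbU, e, he⟩ ha hb
    have hbY : b ∈ Y := hbU.resolve_left hb
    have hef : e = f := hf.subset <| by
      rcases he with ⟨rfl, rfl⟩ | ⟨rfl, rfl⟩
      exacts [Or.inl ⟨ha, hbY⟩, Or.inr ⟨hbY, ha⟩]
    subst hef
    exact hp a ha (he.imp (·.1) (·.2))
  let φ : V → V := fun v => if v ∈ X then v else p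
  have step : ∀ a b, AdjOn s t (X ∪ Y) a b →
      Relation.ReflTransGen (AdjOn s t X) (φ a) (φ b) := by
    intro a b hab
    by_cases ha : a ∈ X <;> by_cases hb : b ∈ X <;> simp only [φ, ha, hb, if_true, if_false]
    · exact .single ⟨ha, hb, hab.2.2⟩
    · rw [crossing a b hab ha hb]
    · rw [crossing b a (Std.Symm.symm _ _ hab) hb ha]
    · rfl
  intro x hx y hy
  have := Relation.ReflTransGen.lift' φ step _ _ (h x (.inl hx) y (.inl hy))
  simp only [Function.onFun, φ, hx, hy, if_true] at this
  exact this

lemma ConnOn.right_of_edgesBetween_eq_singleton {X Y : Set V} (h : ConnOn s t (X ∪ Y))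
    (hXY : Disjoint X Y) {f : E} (hf : edgesBetween s t X Y = {f}) : ConnOn s t Y := by
  rw [union_comm] at h
  rw [edgesBetween_comm] at hf
  exact h.left_of_edgesBetween_eq_singleton hXY.symm hf

lemma ConnOn.eq_of_termPts_subset {Y Z : Set V} (hZ : ConnOn s t Z) (hY : Y.Nonempty)
    (hYZ : Y ⊆ Z) (hT : TermPts s t Y ⊆ TermPts s t Z) : Y = Z := by
  by_contra hne
  rw [← union_sdiff_cancel hYZ] at hZ
  obtain ⟨e, he⟩ := hZ.edgesBetween_nonempty disjoint_sdiff_right hY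
    (sdiff_nonempty.2 fun h => hne (hYZ.antisymm h))
  exact disjoint_left.1 (disjoint_edgesBetween_termPts hYZ sdiff_subset) he
    (hT (edgesBetween_subset_termPts subset_rfl (fun _ hv => hv.2) he))

end Connectivity

section Crossing

variable {V E : Type} (s t : E → V)

noncomputable def numEdgesBetween (X Y : Set V) : ℕ :=
  (edgesBetween s t X Y).ncard

def Crosses (A B : Set V) : Prop :=
  (A ∩ B).Nonempty ∧ (A \ B).Nonempty ∧ (B \ A).Nonempty ∧ (A ∪ B)ᶜ.Nonempty

variable {s t}

lemma numEdgesBetween_comm (X Y : Set V) :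
    numEdgesBetween s t X Y = numEdgesBetween s t Y X := by
  rw [numEdgesBetween, numEdgesBetween, edgesBetween_comm]

lemma kcut_eq_numEdgesBetween (Z : Set V) : kcut s t Z = numEdgesBetween s t Z Zᶜ := by
  rw [kcut, termPts_eq_edgesBetween, numEdgesBetween]

lemma Subcurve.of_mem_of_notMem {Z : Set V} {v w : V} (hv : v ∈ Z) (hw : w ∉ Z) :
    Subcurve Z :=
  ⟨⟨v, hv⟩, fun h => hw (h ▸ mem_univ w)⟩

lemma Crosses.symm {A B : Set V} (h : Crosses A B) : Crosses B A := by
  obtain ⟨hP, hQ, hR, hS⟩ := h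
  exact ⟨inter_comm A B ▸ hP, hR, hQ, union_comm A B ▸ hS⟩

lemma crosses_of_not_subset {A B : Set V} {v w : V} (hv : v ∈ A ∩ B) (hw : w ∉ A ∪ B)
    (hAB : ¬A ⊆ B) (hBA : ¬B ⊆ A) : Crosses A B :=
  ⟨⟨v, hv⟩, sdiff_nonempty.2 hAB, sdiff_nonempty.2 hBA, ⟨w, hw⟩⟩

variable [Finite E]

lemma numEdgesBetween_union_left {X₁ X₂ Y : Set V} (h₁₂ : Disjoint X₁ X₂) (h₁ : Disjoint X₁ Y)
    (h₂ : Disjoint X₂ Y) :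
    numEdgesBetween s t (X₁ ∪ X₂) Y = numEdgesBetween s t X₁ Y + numEdgesBetween s t X₂ Y := by
  refine (congrArg ncard (edgesBetween_union_left X₁ X₂ Y)).trans (ncard_union_eq ?_)
  rw [disjoint_left]
  rintro e (⟨h, h'⟩ | ⟨h, h'⟩) (⟨g, g'⟩ | ⟨g, g'⟩)
  exacts [disjoint_left.1 h₁₂ h g, disjoint_left.1 h₁ h g, disjoint_right.1 h₂ h g,
    disjoint_left.1 h₁₂ h' g']

lemma numEdgesBetween_union_right {X Y₁ Y₂ : Set V} (h₁₂ : Disjoint Y₁ Y₂) (h₁ : Disjoint X Y₁)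
    (h₂ : Disjoint X Y₂) :
    numEdgesBetween s t X (Y₁ ∪ Y₂) = numEdgesBetween s t X Y₁ + numEdgesBetween s t X Y₂ := by
  rw [numEdgesBetween_comm X, numEdgesBetween_comm X, numEdgesBetween_comm X]
  exact numEdgesBetween_union_left h₁₂ h₁.symm h₂.symm

lemma ConnOn.numEdgesBetween_pos {X Y : Set V} (h : ConnOn s t (X ∪ Y)) (hXY : Disjoint X Y)
    (hX : X.Nonempty) (hY : Y.Nonempty) : 0 < numEdgesBetween s t X Y :=
  (ncard_pos (toFinite _)).2 (h.edgesBetween_nonempty hXY hX hY)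

section Regions

variable (s t) (A B : Set V)

lemma kcut_eq_sum_regions_left : kcut s t A =
    numEdgesBetween s t (A ∩ B) (B \ A) + numEdgesBetween s t (A ∩ B) (A ∪ B)ᶜ +
      (numEdgesBetween s t (A \ B) (B \ A) + numEdgesBetween s t (A \ B) (A ∪ B)ᶜ) := by
  have h : numEdgesBetween s t A Aᶜ =
      numEdgesBetween s t (A ∩ B ∪ A \ B) (B \ A ∪ (A ∪ B)ᶜ) := by
    congr 1 <;> tauto_set
  rw [kcut_eq_numEdgesBetween, h, numEdgesBetween_union_left, numEdgesBetween_union_right,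
    numEdgesBetween_union_right] <;> tauto_set

lemma kcut_eq_sum_regions_right : kcut s t B =
    numEdgesBetween s t (A ∩ B) (A \ B) + numEdgesBetween s t (A ∩ B) (A ∪ B)ᶜ +
      (numEdgesBetween s t (A \ B) (B \ A) + numEdgesBetween s t (B \ A) (A ∪ B)ᶜ) := by
  have h : numEdgesBetween s t B Bᶜ =
      numEdgesBetween s t (A ∩ B ∪ B \ A) (A \ B ∪ (A ∪ B)ᶜ) := by
    congr 1 <;> tauto_set
  rw [kcut_eq_numEdgesBetween, h, numEdgesBetween_union_left, numEdgesBetween_union_right,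
    numEdgesBetween_union_right, numEdgesBetween_comm (B \ A) (A \ B)] <;> tauto_set

lemma kcut_inter_eq_sum_regions : kcut s t (A ∩ B) =
    numEdgesBetween s t (A ∩ B) (A \ B) + numEdgesBetween s t (A ∩ B) (B \ A) +
      numEdgesBetween s t (A ∩ B) (A ∪ B)ᶜ := by
  have h : numEdgesBetween s t (A ∩ B) (A ∩ B)ᶜ =
      numEdgesBetween s t (A ∩ B) (A \ B ∪ B \ A ∪ (A ∪ B)ᶜ) := by
    congr 1; tauto_set
  rw [kcut_eq_numEdgesBetween, h, numEdgesBetween_union_right, numEdgesBetween_union_right] <;>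
    tauto_set

lemma kcut_union_eq_sum_regions : kcut s t (A ∪ B) =
    numEdgesBetween s t (A ∩ B) (A ∪ B)ᶜ + numEdgesBetween s t (A \ B) (A ∪ B)ᶜ +
      numEdgesBetween s t (B \ A) (A ∪ B)ᶜ := by
  have h : numEdgesBetween s t (A ∪ B) (A ∪ B)ᶜ =
      numEdgesBetween s t (A ∩ B ∪ A \ B ∪ B \ A) (A ∪ B)ᶜ := by
    congr 1; tauto_set
  rw [kcut_eq_numEdgesBetween, h, numEdgesBetween_union_left, numEdgesBetween_union_left] <;>
    tauto_set

end Regions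

end Crossing

section CrossingTails

variable {V E : Type} {s t : E → V} {A B : Set V}

lemma Crosses.numEdgesBetween_pos [Finite E] (h : Crosses A B) (hA : IsTail s t A)
    (hB : IsTail s t B) :
    0 < numEdgesBetween s t (A ∩ B) (A \ B) ∧ 0 < numEdgesBetween s t (A ∩ B) (B \ A) ∧
      0 < numEdgesBetween s t (A \ B) (A ∪ B)ᶜ ∧ 0 < numEdgesBetween s t (B \ A) (A ∪ B)ᶜ := by
  obtain ⟨hP, hQ, hR, hS⟩ := h
  have hA' : ConnOn s t (A ∩ B ∪ A \ B) := by rw [inter_union_sdiff]; exact hA.2.1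
  have hB' : ConnOn s t (A ∩ B ∪ B \ A) := by
    rw [show A ∩ B ∪ B \ A = B by tauto_set]; exact hB.2.1
  have hAc : ConnOn s t (B \ A ∪ (A ∪ B)ᶜ) := by
    rw [show B \ A ∪ (A ∪ B)ᶜ = Aᶜ by tauto_set]; exact hA.2.2
  have hBc : ConnOn s t (A \ B ∪ (A ∪ B)ᶜ) := by
    rw [show A \ B ∪ (A ∪ B)ᶜ = Bᶜ by tauto_set]; exact hB.2.2
  exact ⟨hA'.numEdgesBetween_pos (by tauto_set) hP hQ, hB'.numEdgesBetween_pos (by tauto_set) hP hR,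
    hBc.numEdgesBetween_pos (by tauto_set) hQ hS, hAc.numEdgesBetween_pos (by tauto_set) hR hS⟩

lemma Crosses.isTail_inter_of_left (h : Crosses A B) (hA : IsTail s t A) (hB : IsTail s t B)
    (h1 : numEdgesBetween s t (A ∩ B) (A \ B) = 1) : IsTail s t (A ∩ B) := by
  obtain ⟨⟨v, hv⟩, hQ, -, ⟨w, hw⟩⟩ := h
  obtain ⟨f, hf⟩ := ncard_eq_one.1 h1
  have hA' : ConnOn s t (A ∩ B ∪ A \ B) := by rw [inter_union_sdiff]; exact hA.2.1
  have hQconn : ConnOn s t (A \ B) := hA'.right_of_edgesBetween_eq_singleton (by tauto_set) hf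
  have hBc : ConnOn s t (A \ B ∪ (A ∪ B)ᶜ) := by
    rw [show A \ B ∪ (A ∪ B)ᶜ = Bᶜ by tauto_set]; exact hB.2.2
  have hQS : (edgesBetween s t (A \ B) Aᶜ).Nonempty :=
    (hBc.edgesBetween_nonempty (by tauto_set) hQ ⟨w, hw⟩).mono
      (edgesBetween_mono subset_rfl (by tauto_set))
  refine ⟨.of_mem_of_notMem hv fun h => hw (.inl h.1),
    hA'.left_of_edgesBetween_eq_singleton (by tauto_set) hf, ?_⟩
  rw [show (A ∩ B)ᶜ = A \ B ∪ Aᶜ by tauto_set]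
  exact hQconn.union_of_edgesBetween_nonempty hA.2.2 hQS

lemma Crosses.isTail_inter (h : Crosses A B) (hA : IsTail s t A) (hB : IsTail s t B)
    (h1 : numEdgesBetween s t (A ∩ B) (A \ B) = 1 ∨ numEdgesBetween s t (A ∩ B) (B \ A) = 1) :
    IsTail s t (A ∩ B) := by
  rcases h1 with h1 | h1
  · exact h.isTail_inter_of_left hA hB h1
  · rw [inter_comm] at h1 ⊢
    exact h.symm.isTail_inter_of_left hB hA h1

lemma Crosses.isTail_union (h : Crosses A B) (hA : IsTail s t A) (hB : IsTail s t B)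
    (h1 : numEdgesBetween s t (A \ B) (A ∪ B)ᶜ = 1) : IsTail s t (A ∪ B) := by
  obtain ⟨hP, -, -, ⟨w, hw⟩⟩ := h
  obtain ⟨f, hf⟩ := ncard_eq_one.1 h1
  have hBc : ConnOn s t (A \ B ∪ (A ∪ B)ᶜ) := by
    rw [show A \ B ∪ (A ∪ B)ᶜ = Bᶜ by tauto_set]; exact hB.2.2
  exact ⟨.of_mem_of_notMem (.inl hP.some_mem.1) hw, hA.2.1.union_of_inter_nonempty hB.2.1 hP,
    hBc.right_of_edgesBetween_eq_singleton (by tauto_set) hf⟩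

end CrossingTails

section NestedTails

variable {V E : Type} {s t : E → V} {S : Set (Set V)}

lemma tlevel_subset : ∀ m, Tlevel s t S m ⊆ S
  | 0 => subset_rfl
  | _ + 1 => fun _ hZ => hZ.1

lemma sInter_tlevel_subset_succ (m : ℕ) :
    ⋂₀ Tlevel s t S m ⊆ ⋂₀ Tlevel s t S (m + 1) :=
  subset_sInter fun _ hZ => hZ.2.1.subset

lemma freePair_sInter_tlevel_succ (m : ℕ) :
    FreePair s t (⋂₀ Tlevel s t S m) (⋂₀ Tlevel s t S (m + 1)) :=
  FreePair.sInter_right fun _ hZ => hZ.2.2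

lemma freePair_sInter_tlevel_of_lt {l m : ℕ} (h : l < m) :
    FreePair s t (⋂₀ Tlevel s t S l) (⋂₀ Tlevel s t S m) := by
  obtain ⟨k, rfl⟩ := Nat.exists_eq_add_of_lt h
  exact (freePair_sInter_tlevel_succ _).mono_left
    (monotone_nat_of_le_succ sInter_tlevel_subset_succ (Nat.le_add_right l k))
    (sInter_tlevel_subset_succ _)

lemma tset_pairwise_freePair : (Tset s t S).Pairwise (FreePair s t) := by
  rintro _ ⟨l, -, rfl⟩ _ ⟨m, -, rfl⟩ hne
  rcases lt_trichotomy l m with h | rfl | h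
  · exact freePair_sInter_tlevel_of_lt h
  · exact absurd rfl hne
  · exact (freePair_sInter_tlevel_of_lt h).symm

variable [Finite V] (hS : InfClosed S)
include hS

lemma sInter_tlevel_mem {m : ℕ} (hne : (Tlevel s t S m).Nonempty) : ⋂₀ Tlevel s t S m ∈ S :=
  hS.sInf_mem_of_nonempty (toFinite _) hne (tlevel_subset m)

lemma tset_subset : Tset s t S ⊆ S := by
  rintro _ ⟨m, hm, rfl⟩
  exact sInter_tlevel_mem hS hm

/-- Corollary 4.2. If no member of `Tset` below `Y` met `Y` in a terminal point, `Y` would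
survive into every level, and the intersections of the levels would increase forever. -/
lemma exists_mem_tset_subset_not_freePair (hterm : ∀ Z ∈ S, (TermPts s t Z).Nonempty)
    {Y : Set V} (hY : Y ∈ S) : ∃ X ∈ Tset s t S, X ⊆ Y ∧ ¬ FreePair s t X Y := by
  by_contra! h
  have hmem : ∀ m, Y ∈ Tlevel s t S m := by
    intro m
    induction m with
    | zero => exact hY
    | succ m ih =>
      have hWY := sInter_subset_of_mem ih
      have hfree := h _ ⟨m, ⟨Y, ih⟩, rfl⟩ hWY
      exact ⟨hY, lt_of_le_of_ne hWY fun hEq => not_freePair_self (hterm Y hY) (hEq ▸ hfree),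
        hfree⟩
  have hstrict : StrictMono fun m => ⋂₀ Tlevel s t S m := by
    refine strictMono_nat_of_lt_succ fun m => lt_of_le_of_ne (sInter_tlevel_subset_succ m) ?_
    intro hEq
    have hfree := freePair_sInter_tlevel_succ (s := s) (t := t) (S := S) m
    rw [hEq] at hfree
    exact not_freePair_self (hterm _ (sInter_tlevel_mem hS ⟨Y, hmem (m + 1)⟩)) hfree
  exact not_injective_infinite_finite _ hstrict.injective

end NestedTails

lemma infClosed_of_inter_mem_of_not_subset {V : Type} {S : Set (Set V)}
    (h : ∀ A ∈ S, ∀ B ∈ S, ¬A ⊆ B → ¬B ⊆ A → A ∩ B ∈ S) : InfClosed S := by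
  intro A hA B hB
  by_cases hAB : A ⊆ B
  · rwa [inf_eq_left.2 hAB]
  by_cases hBA : B ⊆ A
  · rwa [inf_eq_right.2 hBA]
  exact h A hA B hB hAB hBA

section TwoAndThreeTails

variable {V E : Type} [Finite E] {s t : E → V} {v1 vi vj : V}

lemma infClosed_s2set : InfClosed (S2set s t v1 vi vj) := by
  refine infClosed_of_inter_mem_of_not_subset
    fun A ⟨hA, hkA, hiA, hjA, h1A⟩ B ⟨hB, hkB, hiB, hjB, h1B⟩ hAB hBA => ?_
  have hX := crosses_of_not_subset ⟨hiA, hiB⟩ (not_or.2 ⟨h1A, h1B⟩) hAB hBA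
  obtain ⟨ha, hb, hc, hd⟩ := hX.numEdgesBetween_pos hA hB
  have := kcut_eq_sum_regions_left s t A B
  have := kcut_eq_sum_regions_right s t A B
  have := kcut_inter_eq_sum_regions s t A B
  exact ⟨hX.isTail_inter hA hB (by omega), by omega, ⟨hiA, hiB⟩, ⟨hjA, hjB⟩, fun h => h1A h.1⟩

lemma exists_mem_t2set_subset_not_freePair [Finite V] {Y : Set V}
    (hY : Y ∈ S2set s t v1 vi vj) :
    ∃ X ∈ T2set s t v1 vi vj, X ⊆ Y ∧ ¬ FreePair s t X Y :=
  exists_mem_tset_subset_not_freePair infClosed_s2set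
    (fun _ hZ => (ncard_pos (toFinite _)).1 (by have := hZ.2.1; unfold kcut at this; omega)) hY

lemma not_termPts_subset_union_of_mem_s2set [Finite V] {Y A B : Set V}
    (hY : Y ∈ S2set s t v1 vi vj)
    (hA : ∀ X ∈ T2set s t v1 vi vj, X ⊆ Y → FreePair s t A X)
    (hB : ∀ X ∈ T2set s t v1 vi vj, X ⊆ Y → FreePair s t B X) :
    ¬ TermPts s t Y ⊆ TermPts s t A ∪ TermPts s t B := fun hT => by
  obtain ⟨X, hX, hXY, hXY'⟩ := exists_mem_t2set_subset_not_freePair hY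
  exact hXY' (FreePair.of_termPts_subset hT (hA X hX hXY) (hB X hX hXY)).symm

lemma infClosed_s3set [Finite V] : InfClosed (S3set s t v1 vi vj) := by
  refine infClosed_of_inter_mem_of_not_subset
    fun A ⟨hA, hkA, hiA, hjA, h1A, hfA⟩ B ⟨hB, hkB, hiB, hjB, h1B, hfB⟩ hAB hBA => ?_
  have hX := crosses_of_not_subset ⟨hiA, hiB⟩ (not_or.2 ⟨h1A, h1B⟩) hAB hBA
  obtain ⟨ha, hb, hc, hd⟩ := hX.numEdgesBetween_pos hA hB
  have := kcut_eq_sum_regions_left s t A B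
  have := kcut_eq_sum_regions_right s t A B
  have := kcut_inter_eq_sum_regions s t A B
  have := kcut_union_eq_sum_regions s t A B
  rcases (by omega : kcut s t (A ∩ B) = 2 ∨ kcut s t (A ∩ B) = 3 ∨
      kcut s t (A ∪ B) = 2 ∧ numEdgesBetween s t (A \ B) (A ∪ B)ᶜ = 1) with hP | hP | ⟨hU, hc1⟩
  · exact absurd (termPts_inter_subset A B) <| not_termPts_subset_union_of_mem_s2set
      ⟨hX.isTail_inter hA hB (by omega), hP, ⟨hiA, hiB⟩, ⟨hjA, hjB⟩, fun h => h1A h.1⟩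
      (fun X hX _ => hfA X hX) (fun X hX _ => hfB X hX)
  · exact ⟨hX.isTail_inter hA hB (by omega), hP, ⟨hiA, hiB⟩, ⟨hjA, hjB⟩, fun h => h1A h.1,
      fun W hW => FreePair.of_termPts_subset (termPts_inter_subset A B) (hfA W hW) (hfB W hW)⟩
  · exact absurd (termPts_union_subset A B) <| not_termPts_subset_union_of_mem_s2set
      ⟨hX.isTail_union hA hB hc1, hU, .inl hiA, .inl hjA, not_or.2 ⟨h1A, h1B⟩⟩
      (fun X hX _ => hfA X hX) (fun X hX _ => hfB X hX)

end TwoAndThreeTails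

lemma not_subset_of_disjoint_termPts {V E : Type} {s t : E → V} {A B Z : Set V} (hBZ : B ⊆ Z)
    (hAB : Disjoint (TermPts s t A) (TermPts s t B)) {e : E}
    (he : e ∈ TermPts s t A ∩ TermPts s t Z) : ¬A ⊆ B :=
  fun h => disjoint_left.1 hAB he.1 (termPts_inter_termPts_subset h hBZ he)

lemma termPts_union_subset_of_kcut_eq_two {V E : Type} [Finite E] {s t : E → V}
    {A B Z : Set V} (hAZ : A ⊆ Z) (hBZ : B ⊆ Z) (hAB : Disjoint (TermPts s t A) (TermPts s t B))
    {e e' : E} (he : e ∈ TermPts s t A ∩ TermPts s t Z) (he' : e' ∈ TermPts s t B ∩ TermPts s t Z)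
    (h2 : kcut s t (A ∪ B) = 2) : TermPts s t (A ∪ B) ⊆ TermPts s t Z := by
  have hsub : {e, e'} ⊆ TermPts s t (A ∪ B) :=
    pair_subset (termPts_inter_termPts_subset subset_union_left (union_subset hAZ hBZ) he)
      (termPts_inter_termPts_subset subset_union_right (union_subset hAZ hBZ) he')
  have hne : e ≠ e' := fun h => disjoint_left.1 hAB he.1 (h ▸ he'.1)
  rw [← eq_of_subset_of_ncard_le hsub (by rw [ncard_pair hne]; exact h2.le)]
  exact pair_subset he.2 he'.2

theorem stmt_14_general {V E : Type} [Fintype V] [Fintype E] (s t : E → V)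
    (v1 vi vj : V) (Z : Set V)
    (hZ : IsTail s t Z) (hk : 3 ≤ kcut s t Z) :
    ¬ ∃ W ∈ T2set s t v1 vi vj, ∃ W' ∈ T3set s t v1 vi vj,
        TermPts s t W ∩ TermPts s t Z ≠ ∅ ∧
        TermPts s t W' ∩ TermPts s t Z ≠ ∅ ∧
        W ∪ W' ⊆ Z := by
  rintro ⟨A, hAT, B, hBT, hAterm, hBterm, hABZ⟩
  obtain ⟨hA, hkA, hiA, hjA, h1A⟩ := tset_subset infClosed_s2set hAT
  obtain ⟨hB, hkB, hiB, hjB, h1B, hfB⟩ := tset_subset infClosed_s3set hBT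
  obtain ⟨e, he⟩ := nonempty_iff_ne_empty.2 hAterm
  obtain ⟨e', he'⟩ := nonempty_iff_ne_empty.2 hBterm
  have hfree := (freePair_iff_disjoint.1 (hfB A hAT)).symm
  obtain ⟨hAZ, hBZ⟩ := union_subset_iff.1 hABZ
  have hAB := not_subset_of_disjoint_termPts hBZ hfree he
  have hX := crosses_of_not_subset ⟨hiA, hiB⟩ (not_or.2 ⟨h1A, h1B⟩) hAB
    (not_subset_of_disjoint_termPts hAZ hfree.symm he')
  obtain ⟨ha, hb, hc, hd⟩ := hX.numEdgesBetween_pos hA hB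
  have := kcut_eq_sum_regions_left s t A B
  have := kcut_eq_sum_regions_right s t A B
  have := kcut_inter_eq_sum_regions s t A B
  have := kcut_union_eq_sum_regions s t A B
  rcases (by omega : kcut s t (A ∩ B) = 2 ∧ numEdgesBetween s t (A ∩ B) (B \ A) = 1 ∨
      kcut s t (A ∪ B) = 2) with ⟨hP, hb1⟩ | hU
  · refine not_termPts_subset_union_of_mem_s2set
      ⟨hX.isTail_inter hA hB (.inr hb1), hP, ⟨hiA, hiB⟩, ⟨hjA, hjB⟩, fun h => h1A h.1⟩
      (fun X hX hXP => tset_pairwise_freePair hAT hX ?_) (fun X hX _ => hfB X hX)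
      (termPts_inter_subset A B)
    rintro rfl
    exact hAB (hXP.trans inter_subset_right)
  · have hUZ : A ∪ B = Z := hZ.2.1.eq_of_termPts_subset ⟨vi, .inl hiA⟩ hABZ
      (termPts_union_subset_of_kcut_eq_two hAZ hBZ hfree he he' hU)
    rw [← hUZ] at hk
    omega

/-- Lemma 5.1: for a tail `Z` with `k_Z ≥ 3`, there are no `Z`-terminal tails
`W ∈ T²_{i,j}` and `W' ∈ T³_{i,j}` with `W ∪ W' ⊆ Z`. -/
theorem stmt_14 {V E : Type} [Fintype V] [Fintype E] (s t : E → V)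
    (hC : ConnOn s t Set.univ) (v1 vi vj : V) (Z : Set V)
    (hZ : IsTail s t Z) (hk : 3 ≤ kcut s t Z) :
    ¬ ∃ W ∈ T2set s t v1 vi vj, ∃ W' ∈ T3set s t v1 vi vj,
        TermPts s t W ∩ TermPts s t Z ≠ ∅ ∧
        TermPts s t W' ∩ TermPts s t Z ≠ ∅ ∧
        W ∪ W' ⊆ Z :=
  stmt_14_general s t v1 vi vj Z hZ hk
end

section
/- Let L be an invertible sheaf modeled combinatorially as follows: assign to each subcurve Z of C the number deg_Z L, additive over disjoint components. Suppose L is semistable at every subcurve Z (|deg_Z L_Z| ≤ k_Z/2) and C_1-quasistable at every tail of C (i.e. β_L(Z) := deg_Z L + k_Z/2 > 0 whenever C_1 ⊆ Z, for Z a tail). If moreover for every subcurve Z, deg_Z L = −deg_{Z^c} L, then L is C_1-quasistable at every subcurve Z whose connected components are tails at which L is C_1-quasistable; in particular, an invertible sheaf that is C_1-quasistable at the connected components of a subcurve Z is C_1-quasistable at Z. -/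
open Set

/-- `Y` is a connected component of the subcurve `Z`. -/
def IsCompOf {V E : Type} (s t : E → V) (Y Z : Set V) : Prop :=
  Y.Nonempty ∧ Y ⊆ Z ∧ ConnOn s t Y ∧
    ∀ Y' : Set V, Y ⊆ Y' → Y' ⊆ Z → ConnOn s t Y' → Y' = Y

/-- `C_1`-quasistability of a degree function at a subcurve `Z`:
`|deg Z| ≤ k_Z / 2`, and `deg Z + k_Z / 2 > 0` whenever `v1 ∈ Z`. -/
def QuasiAt {V E : Type} (s t : E → V) (v1 : V) (deg : Set V → ℤ) (Z : Set V) :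
    Prop :=
  2 * |deg Z| ≤ (kcut s t Z : ℤ) ∧ (v1 ∈ Z → 0 < 2 * deg Z + (kcut s t Z : ℤ))

open Relation

/-!
Let `Y` be the connected component of `Z` through `C_1` and `W = Z \ Y`. No node joins `Y`
to `W`, so both the degree and the number of terminal points of `Z` are the sums of those of
`Y` and `W`. Hence `deg_Z L + k_Z/2 = (deg_Y L + k_Y/2) + (deg_W L + k_W/2)`, where the first
summand is positive by quasistability at `Y` and the second is nonnegative by semistability
at `W` (or zero if `W` is empty).
-/

section

variable {V E : Type} (s t : E → V)

/-- `ConnOn s t Z` unfolds to `∀ x ∈ Z, ∀ y ∈ Z, ReflTransGen (AdjWithin s t Z) x y`. -/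
def AdjWithin (Z : Set V) (a b : V) : Prop :=
  a ∈ Z ∧ b ∈ Z ∧ ∃ e, (s e = a ∧ t e = b) ∨ (s e = b ∧ t e = a)

def NoEdgeBetween (Y W : Set V) : Prop :=
  ∀ e, (s e ∈ Y → t e ∉ W) ∧ (t e ∈ Y → s e ∉ W)

def reachWithin (Z : Set V) (v : V) : Set V :=
  {x | x ∈ Z ∧ ReflTransGen (AdjWithin s t Z) v x}

variable {s t} {Z : Set V} {v : V}

theorem AdjWithin.symm {a b : V} (h : AdjWithin s t Z a b) : AdjWithin s t Z b a :=
  ⟨h.2.1, h.1, h.2.2.imp fun _ he => he.symm⟩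

instance : Std.Symm (AdjWithin s t Z) := ⟨fun _ _ => AdjWithin.symm⟩

theorem AdjWithin.mono {Z' : Set V} (hZ : Z ⊆ Z') {a b : V} (h : AdjWithin s t Z a b) :
    AdjWithin s t Z' a b :=
  ⟨hZ h.1, hZ h.2.1, h.2.2⟩

theorem reachWithin_subset : reachWithin s t Z v ⊆ Z := fun _ hx => hx.1

theorem mem_reachWithin_self (hv : v ∈ Z) : v ∈ reachWithin s t Z v := ⟨hv, .refl⟩

theorem reachWithin_closed {a b : V} (hab : AdjWithin s t Z a b)
    (ha : a ∈ reachWithin s t Z v) : b ∈ reachWithin s t Z v :=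
  ⟨hab.2.1, ha.2.tail hab⟩

theorem reflTransGen_reachWithin {x : V} (hx : ReflTransGen (AdjWithin s t Z) v x) :
    ReflTransGen (AdjWithin s t (reachWithin s t Z v)) v x := by
  induction hx with
  | refl => exact .refl
  | tail hpath hstep ih => exact ih.tail ⟨⟨hstep.1, hpath⟩, ⟨hstep.2.1, hpath.tail hstep⟩, hstep.2.2⟩

theorem connOn_reachWithin : ConnOn s t (reachWithin s t Z v) := by
  intro x hx y hy
  exact (Std.Symm.symm _ _ (reflTransGen_reachWithin hx.2)).trans (reflTransGen_reachWithin hy.2)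

theorem isCompOf_reachWithin (hv : v ∈ Z) : IsCompOf s t (reachWithin s t Z v) Z := by
  refine ⟨⟨v, mem_reachWithin_self hv⟩, reachWithin_subset, connOn_reachWithin, ?_⟩
  intro Y' hY' hY'Z hconn
  refine Subset.antisymm (fun x hx => ⟨hY'Z hx, ?_⟩) hY'
  exact ReflTransGen.mono (fun _ _ => AdjWithin.mono hY'Z) _ _
    (hconn v (hY' (mem_reachWithin_self hv)) x hx)

theorem noEdgeBetween_reachWithin_sdiff :
    NoEdgeBetween s t (reachWithin s t Z v) (Z \ reachWithin s t Z v) := fun e =>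
  ⟨fun hs ht => ht.2 (reachWithin_closed ⟨hs.1, ht.1, e, .inl ⟨rfl, rfl⟩⟩ hs),
    fun ht hs => hs.2 (reachWithin_closed ⟨ht.1, hs.1, e, .inr ⟨rfl, rfl⟩⟩ ht)⟩

variable {Y W : Set V}

theorem termPts_union_of_separated (hYW : Disjoint Y W)
    (hsep : NoEdgeBetween s t Y W) :
    TermPts s t (Y ∪ W) = TermPts s t Y ∪ TermPts s t W := by
  ext e
  have := hsep e
  have := hYW.notMem_of_mem_left (a := s e)
  have := hYW.notMem_of_mem_left (a := t e)
  simp only [TermPts, mem_union, mem_ofPred_eq]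
  tauto

theorem disjoint_termPts_of_separated (hYW : Disjoint Y W)
    (hsep : NoEdgeBetween s t Y W) :
    Disjoint (TermPts s t Y) (TermPts s t W) := by
  refine Set.disjoint_left.2 fun e hY hW => ?_
  have := hsep e
  have := hYW.notMem_of_mem_left (a := s e)
  have := hYW.notMem_of_mem_left (a := t e)
  simp only [TermPts, mem_ofPred_eq] at hY hW
  tauto

theorem kcut_union_of_separated [Finite E] (hYW : Disjoint Y W)
    (hsep : NoEdgeBetween s t Y W) :
    kcut s t (Y ∪ W) = kcut s t Y + kcut s t W := by
  rw [kcut, termPts_union_of_separated hYW hsep,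
    ncard_union_eq (disjoint_termPts_of_separated hYW hsep) (toFinite _) (toFinite _)]
  rfl

theorem kcut_empty : kcut s t (∅ : Set V) = 0 := by
  simp [kcut, TermPts]

end

theorem stmt_17_general {V E : Type} [Fintype E] (s t : E → V)
    (v1 : V) (deg : Set V → ℤ)
    (hadd : ∀ Z Z' : Set V, Z ∩ Z' = ∅ → deg (Z ∪ Z') = deg Z + deg Z')
    (hss : ∀ Z : Set V, Subcurve Z → 2 * |deg Z| ≤ (kcut s t Z : ℤ)) :
    ∀ Z : Set V, Subcurve Z →
      (∀ Y : Set V, IsCompOf s t Y Z →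
        IsTail s t Y ∧ QuasiAt s t v1 deg Y) →
      QuasiAt s t v1 deg Z := by
  intro Z hZ hcomp
  refine ⟨hss Z hZ, fun hv1 => ?_⟩
  set Y := reachWithin s t Z v1
  have hY : 0 < 2 * deg Y + kcut s t Y :=
    (hcomp Y (isCompOf_reachWithin hv1)).2.2 (mem_reachWithin_self hv1)
  have hW : 0 ≤ 2 * deg (Z \ Y) + kcut s t (Z \ Y) := by
    rcases (Z \ Y).eq_empty_or_nonempty with hempty | hne
    · have hdeg_empty : deg ∅ = 0 := by simpa using hadd ∅ ∅ (empty_inter ∅)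
      simp [hempty, hdeg_empty, kcut_empty]
    · linarith [neg_abs_le (deg (Z \ Y)),
        hss _ ⟨hne, ne_top_of_le_ne_top hZ.2 sdiff_subset⟩]
  rw [← union_sdiff_cancel (reachWithin_subset : Y ⊆ Z),
    hadd _ _ disjoint_sdiff_right.inter_eq,
    kcut_union_of_separated disjoint_sdiff_right noEdgeBetween_reachWithin_sdiff]
  push_cast
  linarith

/-- Second step of Proposition 6.2: a degree-0 line bundle, semistable at every
subcurve and `C_1`-quasistable at every tail, is `C_1`-quasistable at every
subcurve whose connected components are tails at which it is
`C_1`-quasistable. -/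
theorem stmt_17 {V E : Type} [Fintype V] [Fintype E] (s t : E → V)
    (hC : ConnOn s t Set.univ) (v1 : V) (deg : Set V → ℤ)
    (hadd : ∀ Z Z' : Set V, Z ∩ Z' = ∅ → deg (Z ∪ Z') = deg Z + deg Z')
    (hdeg0 : ∀ Z : Set V, Subcurve Z → deg Z = - deg Zᶜ)
    (hss : ∀ Z : Set V, Subcurve Z → 2 * |deg Z| ≤ (kcut s t Z : ℤ))
    (hqs : ∀ Z : Set V, IsTail s t Z → QuasiAt s t v1 deg Z) :
    ∀ Z : Set V, Subcurve Z →
      (∀ Y : Set V, IsCompOf s t Y Z →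
        IsTail s t Y ∧ QuasiAt s t v1 deg Y) →
      QuasiAt s t v1 deg Z :=
  stmt_17_general s t v1 deg hadd hss
end
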